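/- arXiv:0907.3527 — 2 statements merged into one kernel-verified Lean document; each statement's English description precedes it below -/
import Mathlib

section
/- Let K be an algebraically closed field, n a natural number, G an invertible symmetric n×n matrix over K, and A an n×n matrix over K satisfying Aᵀ * G * A = G. Then the number, counted with multiplicity, of roots of the characteristic polynomial of A that are roots of unity different from 1 and −1 is even. -/
open Polynomial Matrix
open scoped Classical

/-!
From `Aᵀ * G * A = G` we get `A⁻¹ = G⁻¹ * (Aᵀ * G)`, so `A⁻¹` has the characteristic polynomial
of `Aᵀ`, i.e. of `A`. On the other hand the roots of `charpoly A⁻¹` are the inverses of those of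
`charpoly A` (its reverse, up to a constant). Hence the roots of `charpoly A` are stable under
`α ↦ α⁻¹`, which preserves the roots of unity other than `±1` and fixes none of them: they pair off.
-/
theorem Multiset.even_card_of_map_eq_self {α : Type*} {f : α → α} (hf : Function.Involutive f)
    {s : Multiset α} (hs : s.map f = s) (hfix : ∀ a ∈ s, f a ≠ a) : Even (Multiset.card s) := by
  have hcount : ∀ a, s.count (f a) = s.count a := fun a => by
    conv_lhs => rw [← hs]
    exact Multiset.count_map_eq_count' f s hf.injective a
  -- `count` is constant on the orbits `{a, f a}`, so mod 2 the terms cancel in pairs.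
  rw [← ZMod.natCast_eq_zero_iff_even, ← Multiset.toFinset_sum_count_eq, Nat.cast_sum]
  refine Finset.sum_involution (fun a _ => f a) (fun a _ => ?_)
    (fun a ha _ => hfix a (Multiset.mem_toFinset.mp ha)) (fun a ha => ?_) (fun a _ => hf a)
  · rw [hcount, ← two_mul, show (2 : ZMod 2) = 0 from rfl, zero_mul]
  · exact Multiset.mem_toFinset.mpr (hs ▸ Multiset.mem_map_of_mem f (Multiset.mem_toFinset.mp ha))

namespace Polynomial

variable {K : Type*} [Field K]

theorem roots_reverse_X_sub_C {a : K} (ha : a ≠ 0) : (X - C a).reverse.roots = {a⁻¹} := by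
  have hX : (X : K[X]).reverse = 1 := by
    rw [← one_mul X, reverse_mul_X, ← C_1, reverse_C]
  have : (X - C a).reverse = C (-a) * (X - C a⁻¹) := by
    rw [sub_eq_add_neg, ← C_neg, reverse_add_C, hX, mul_sub, ← C_mul, neg_mul,
      mul_inv_cancel₀ ha, C_neg, C_neg, C_1, natDegree_X, pow_one]
    ring
  rw [this, roots_C_mul _ (neg_ne_zero.mpr ha), roots_X_sub_C]

theorem roots_reverse_prod_X_sub_C {s : Multiset K} (hs : 0 ∉ s) :
    (s.map (X - C ·)).prod.reverse.roots = s.map (·⁻¹) := by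
  induction s using Multiset.induction_on with
  | empty => rw [Multiset.map_zero, Multiset.prod_zero, ← C_1, reverse_C, roots_C]; rfl
  | cons a s ih =>
    rw [Multiset.mem_cons, not_or] at hs
    have ha : a ≠ 0 := Ne.symm hs.1
    rw [Multiset.map_cons, Multiset.prod_cons, reverse_mul_of_domain, roots_mul,
      roots_reverse_X_sub_C ha, ih hs.2, Multiset.map_cons, Multiset.singleton_add]
    simp [X_sub_C_ne_zero, Multiset.prod_eq_zero_iff]

theorem roots_reverse {p : K[X]} (hp : p.Splits) (h0 : p.coeff 0 ≠ 0) :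
    p.reverse.roots = p.roots.map (·⁻¹) := by
  have hp0 : p ≠ 0 := fun h => h0 (by simp [h])
  have : 0 ∉ p.roots := by
    simpa [hp0, coeff_zero_eq_eval_zero] using h0
  conv_lhs => rw [hp.eq_prod_roots]
  rw [reverse_mul_of_domain, reverse_C, roots_C_mul _ (leadingCoeff_ne_zero.mpr hp0),
    roots_reverse_prod_X_sub_C this]

end Polynomial

namespace Matrix

variable {n R K : Type*} [Fintype n] [DecidableEq n] [CommRing R] [Field K]

theorem isUnit_of_transpose_mul_mul_self_eq {G A : Matrix n n R} (hG : IsUnit G)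
    (hA : Aᵀ * G * A = G) : IsUnit A := by
  rw [isUnit_iff_isUnit_det] at hG ⊢
  have hdet : A.det * (A.det * G.det) = G.det := by
    simpa [det_mul, det_transpose, mul_comm, mul_left_comm] using congrArg det hA
  exact isUnit_of_mul_isUnit_left (hdet ▸ hG)

theorem charpoly_inv_of_transpose_mul_mul_self_eq {G A : Matrix n n R} (hG : IsUnit G)
    (hA : Aᵀ * G * A = G) : A⁻¹.charpoly = A.charpoly := by
  have hinv : A⁻¹ = G⁻¹ * (Aᵀ * G) :=
    inv_eq_left_inv (by rw [mul_assoc, hA, nonsing_inv_mul G ((isUnit_iff_isUnit_det G).mp hG)])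
  rw [hinv, charpoly_mul_comm, mul_assoc, mul_nonsing_inv G ((isUnit_iff_isUnit_det G).mp hG),
    mul_one, charpoly_transpose]

theorem roots_charpoly_inv {A : Matrix n n K} (hA : IsUnit A) (hsplit : A.charpoly.Splits) :
    A⁻¹.charpoly.roots = A.charpoly.roots.map (·⁻¹) := by
  have hdet : A.det ≠ 0 := ((isUnit_iff_isUnit_det A).mp hA).ne_zero
  have hcoeff : A.charpoly.coeff 0 ≠ 0 := fun h => hdet (by simp [det_eq_sign_charpoly_coeff, h])
  rw [charpoly_inv A hA, ← reverse_charpoly, Ring.inverse_eq_inv', ← C_1, ← C_neg, ← C_pow,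
    ← C_mul, roots_C_mul _ (by simp [hdet]), roots_reverse hsplit hcoeff]

end Matrix

theorem even_card_charpoly_roots_rootOfUnity_ne_one_neg_one_of_preserves_form_general
    {K : Type*} [Field K] [IsAlgClosed K] {n : ℕ}
    (G A : Matrix (Fin n) (Fin n) K)
    (hG : IsUnit G)
    (hA : Aᵀ * G * A = G) :
    Even (Multiset.card
      (A.charpoly.roots.filter fun α =>
        (∃ k : ℕ, 0 < k ∧ α ^ k = 1) ∧ α ≠ 1 ∧ α ≠ -1)) := by
  set P : K → Prop := fun α => (∃ k : ℕ, 0 < k ∧ α ^ k = 1) ∧ α ≠ 1 ∧ α ≠ -1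
  have hP : ∀ α : K, P α⁻¹ ↔ P α := fun α => by simp [P, inv_pow, inv_eq_iff_eq_inv]
  have hroots : A.charpoly.roots.map (·⁻¹) = A.charpoly.roots := by
    rw [← roots_charpoly_inv (isUnit_of_transpose_mul_mul_self_eq hG hA) (IsAlgClosed.splits _),
      charpoly_inv_of_transpose_mul_mul_self_eq hG hA]
  refine Multiset.even_card_of_map_eq_self inv_involutive ?_ fun α hα hinv => ?_
  · conv_rhs => rw [← hroots]
    rw [Multiset.filter_map]
    exact congrArg _ (Multiset.filter_congr fun α _ => (hP α).symm)
  · obtain ⟨⟨k, hk, hαk⟩, hα1, hα2⟩ := Multiset.of_mem_filter hα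
    rcases inv_eq_self₀.mp hinv with h | h | h
    · exact hα2 h
    · rw [h, zero_pow hk.ne'] at hαk
      exact zero_ne_one hαk
    · exact hα1 h

/-- Over an algebraically closed field, if `A` preserves a nondegenerate symmetric
bilinear form with Gram matrix `G`, then the number of roots of `charpoly A`
(counted with multiplicity) that are roots of unity different from `1` and `-1`
is even. -/
theorem even_card_charpoly_roots_rootOfUnity_ne_one_neg_one_of_preserves_form
    {K : Type*} [Field K] [IsAlgClosed K] {n : ℕ}
    (G A : Matrix (Fin n) (Fin n) K)
    (hG : IsUnit G) (hGsymm : Gᵀ = G)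
    (hA : Aᵀ * G * A = G) :
    Even (Multiset.card
      (A.charpoly.roots.filter fun α =>
        (∃ k : ℕ, 0 < k ∧ α ^ k = 1) ∧ α ≠ 1 ∧ α ≠ -1)) :=
  even_card_charpoly_roots_rootOfUnity_ne_one_neg_one_of_preserves_form_general G A hG hA
end

section
/- Let K be an algebraically closed field, n an even natural number, G an invertible symmetric n×n matrix over K, and A an n×n matrix over K satisfying Aᵀ * G * A = G. Then the multiplicity of 1 as a root of the characteristic polynomial of A plus the multiplicity of −1 as a root of the characteristic polynomial of A is an even number. -/
open Polynomial Matrix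
open scoped Classical

/-!
Since `A⁻¹ = G⁻¹ Aᵀ G` is conjugate to `Aᵀ`, the matrices `A` and `A⁻¹` have the same
characteristic polynomial. On the other hand the characteristic polynomial of `A⁻¹` is, up to a
unit, the reverse of that of `A`, whose roots are the inverses of those of `A`. Hence the
multiset of eigenvalues is stable under `a ↦ a⁻¹`. The eigenvalues that are not fixed by this
involution are matched in pairs `{a, a⁻¹}` of equal multiplicity, so there is an even number of
them; as `0` is not an eigenvalue, the fixed ones are `1` and `-1`, and they make up the rest
of the even total `n`.
-/

namespace Multiset

theorem even_card_filter_ne_of_count_eq {α : Type*} [DecidableEq α] {f : α → α}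
    (hf : Function.Involutive f) {s : Multiset α} (hs : ∀ a, s.count (f a) = s.count a) :
    Even (card (s.filter fun a => f a ≠ a)) := by
  set t := s.filter fun a => f a ≠ a
  have ht : ∀ a, t.count (f a) = t.count a := by
    intro a
    simp only [t, count_filter, hf a, hs, ne_comm]
  rw [← ZMod.natCast_eq_zero_iff_even, ← toFinset_sum_count_eq, Nat.cast_sum]
  refine Finset.sum_involution (fun a _ => f a) (fun a _ => ?_) (fun a ha _ => ?_)
    (fun a ha => ?_) (fun a _ => hf a)
  · rw [ht, ← two_mul]
    exact zero_mul _
  · exact (mem_filter.1 (mem_toFinset.1 ha)).2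
  · rw [mem_toFinset, ← count_ne_zero, ht, count_ne_zero]
    exact mem_toFinset.1 ha

theorem card_filter_inv_eq_self {K : Type*} [Field K] {s : Multiset K} (h0 : (0 : K) ∉ s)
    (hK : (-1 : K) ≠ 1) :
    card (s.filter fun a => a⁻¹ = a) = s.count 1 + s.count (-1) := by
  have hboth : s.filter (fun a => a = 1 ∧ a = -1) = 0 :=
    filter_eq_nil.2 fun a _ h => hK (h.2.symm.trans h.1)
  have hfixed : s.filter (fun a => a⁻¹ = a) =
      replicate (s.count 1) 1 + replicate (s.count (-1)) (-1) := by
    rw [← filter_eq', ← filter_eq', filter_add_filter, hboth, add_zero]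
    refine filter_congr fun a ha => ?_
    rw [inv_eq_self₀]
    have := ne_of_mem_of_not_mem ha h0
    tauto
  rw [hfixed, card_add, card_replicate, card_replicate]

end Multiset

namespace Polynomial

theorem reverse_pow {R : Type*} [Semiring R] [NoZeroDivisors R] (p : R[X]) (m : ℕ) :
    (p ^ m).reverse = p.reverse ^ m := by
  induction m with
  | zero => simpa using reverse_C (1 : R)
  | succ m ih => rw [pow_succ, reverse_mul_of_domain, ih, pow_succ]

variable {K : Type*} [Field K]

theorem reverse_X_sub_C {a : K} (ha : a ≠ 0) : (X - C a).reverse = C (-a) * (X - C a⁻¹) := by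
  rw [sub_eq_add_neg, ← C_neg, reverse_add_C, mul_sub, ← C_mul, neg_mul, mul_inv_cancel₀ ha,
    show (X : K[X]).reverse = 1 by rw [← one_mul X, reverse_mul_X, ← C_1, reverse_C]]
  simp [sub_eq_add_neg, add_comm]

theorem rootMultiplicity_inv_reverse (p : K[X]) {a : K} (ha : a ≠ 0) :
    p.reverse.rootMultiplicity a⁻¹ = p.rootMultiplicity a := by
  rcases eq_or_ne p 0 with rfl | hp
  · simp
  obtain ⟨q, hpq, hq⟩ := p.exists_eq_pow_rootMultiplicity_mul_and_not_dvd hp a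
  have : Invertible a := invertibleOfNonzero ha
  have hq' : ¬ q.reverse.IsRoot a⁻¹ := by
    rwa [IsRoot.def, ← invOf_eq_inv, ← eval₂_id, eval₂_reverse_eq_zero_iff, eval₂_id,
      ← IsRoot.def, ← dvd_iff_isRoot]
  have hq0 : q.reverse ≠ 0 := by rintro h; simp [h] at hq'
  conv_lhs => rw [hpq, reverse_mul_of_domain, reverse_pow, reverse_X_sub_C ha, mul_pow, mul_assoc,
    ← C_pow]
  have hne : (X - C a⁻¹) ^ p.rootMultiplicity a * q.reverse ≠ 0 :=
    mul_ne_zero (pow_ne_zero _ (X_sub_C_ne_zero _)) hq0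
  rw [rootMultiplicity_mul (mul_ne_zero (by simp [ha]) hne), rootMultiplicity_C, zero_add,
    rootMultiplicity_mul hne, rootMultiplicity_X_sub_C_pow, rootMultiplicity_eq_zero hq', add_zero]

end Polynomial

namespace Matrix

section CommRing

variable {R : Type*} [CommRing R] {n : Type*} [Fintype n] [DecidableEq n] {G A : Matrix n n R}

theorem isUnit_of_transpose_mul_mul_eq (hG : IsUnit G) (hA : Aᵀ * G * A = G) : IsUnit A := by
  rw [isUnit_iff_isUnit_det] at hG ⊢
  have hd := congrArg det hA
  rw [det_mul, det_mul, det_transpose, mul_right_comm] at hd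
  exact .of_mul_eq_one _ (hG.mul_right_cancel (hd.trans (one_mul _).symm))

theorem inv_eq_of_transpose_mul_mul_eq (hG : IsUnit G) (hA : Aᵀ * G * A = G) :
    A⁻¹ = G⁻¹ * Aᵀ * G := by
  refine inv_eq_left_inv ?_
  rw [mul_assoc, mul_assoc, ← mul_assoc Aᵀ, hA,
    nonsing_inv_mul G ((isUnit_iff_isUnit_det G).1 hG)]

theorem charpoly_inv_of_transpose_mul_mul_eq (hG : IsUnit G) (hA : Aᵀ * G * A = G) :
    A⁻¹.charpoly = A.charpoly := by
  rw [inv_eq_of_transpose_mul_mul_eq hG hA, ← charpoly_transpose A, ← hG.unit_spec,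
    charpoly_units_conj']

end CommRing

variable {K : Type*} [Field K] {n : Type*} [Fintype n] [DecidableEq n]

theorem rootMultiplicity_inv_charpoly_inv {A : Matrix n n K} (hA : IsUnit A) {a : K}
    (ha : a ≠ 0) :
    A⁻¹.charpoly.rootMultiplicity a⁻¹ = A.charpoly.rootMultiplicity a := by
  have hdet : A.det ≠ 0 := ((isUnit_iff_isUnit_det A).1 hA).ne_zero
  rw [charpoly_inv A hA, ← reverse_charpoly, ← C_1, ← C_neg, ← C_pow, ← C_mul,
    rootMultiplicity_mul, rootMultiplicity_C, zero_add, rootMultiplicity_inv_reverse _ ha]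
  simp [hdet, A.charpoly_monic.ne_zero]

theorem count_inv_roots_charpoly_of_transpose_mul_mul_eq {G A : Matrix n n K} (hG : IsUnit G)
    (hA : Aᵀ * G * A = G) (a : K) :
    A.charpoly.roots.count a⁻¹ = A.charpoly.roots.count a := by
  rcases eq_or_ne a 0 with rfl | ha
  · simp
  rw [count_roots, count_roots, ← charpoly_inv_of_transpose_mul_mul_eq hG hA,
    rootMultiplicity_inv_charpoly_inv (isUnit_of_transpose_mul_mul_eq hG hA) ha,
    charpoly_inv_of_transpose_mul_mul_eq hG hA]

end Matrix

theorem even_count_one_add_count_neg_one_charpoly_roots_of_preserves_form_general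
    {K : Type*} [Field K] [IsAlgClosed K] {n : ℕ} (hn : Even n)
    (G A : Matrix (Fin n) (Fin n) K)
    (hG : IsUnit G)
    (hA : Aᵀ * G * A = G) :
    Even (A.charpoly.roots.count 1 + A.charpoly.roots.count (-1)) := by
  set s := A.charpoly.roots
  rcases eq_or_ne (-1 : K) 1 with hchar | hchar
  · rw [hchar]
    exact Even.add_self _
  have hs : ∀ a, s.count a⁻¹ = s.count a :=
    count_inv_roots_charpoly_of_transpose_mul_mul_eq hG hA
  have h0 : (0 : K) ∉ s := by
    rw [mem_roots A.charpoly_monic.ne_zero, ← mem_spectrum_iff_isRoot_charpoly,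
      spectrum.zero_mem_iff, not_not]
    exact isUnit_of_transpose_mul_mul_eq hG hA
  have hcard : Multiset.card s = n := by
    rw [IsAlgClosed.card_roots_eq_natDegree, charpoly_natDegree_eq_dim, Fintype.card_fin]
  rw [← Multiset.filter_add_not (fun a => a⁻¹ = a) s, Multiset.card_add,
    Multiset.card_filter_inv_eq_self h0 hchar] at hcard
  exact (Nat.even_add.1 (hcard ▸ hn)).2
    (Multiset.even_card_filter_ne_of_count_eq inv_involutive hs)

/-- Over an algebraically closed field, if `n` is even and `A` preserves a
nondegenerate symmetric bilinear form with Gram matrix `G`, then the multiplicity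
of `1` plus the multiplicity of `-1` as roots of `charpoly A` is even. -/
theorem even_count_one_add_count_neg_one_charpoly_roots_of_preserves_form
    {K : Type*} [Field K] [IsAlgClosed K] {n : ℕ} (hn : Even n)
    (G A : Matrix (Fin n) (Fin n) K)
    (hG : IsUnit G) (hGsymm : Gᵀ = G)
    (hA : Aᵀ * G * A = G) :
    Even (A.charpoly.roots.count 1 + A.charpoly.roots.count (-1)) :=
  even_count_one_add_count_neg_one_charpoly_roots_of_preserves_form_general hn G A hG hA
end
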